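/- arXiv:0812.3342 — 6 statements merged into one kernel-verified Lean document; each statement's English description precedes it below -/
import Mathlib

section
/- The κ-vector is invariant under linear changes of coordinates: for every tuple A = (A_1, …, A_e) of d×d matrices over k and every invertible d×d matrix β over k, one has κ_j(βᵗA_1β, …, βᵗA_eβ) = κ_j(A_1, …, A_e) for all 0 ≤ j ≤ e−1. -/
open Matrix

/-- The matrix of the map `ψ_j(A) : k^d ⊗ Λ^j(k^e) → k^d ⊗ Λ^{j+1}(k^e)` determined by
`ψ_j(A)(u ⊗ E) = Σ_i (A_i u) ⊗ (E ∧ e_i)`, written in the standard bases: basis vectors of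
`k^d ⊗ Λ^j(k^e)` are indexed by pairs `(p, S)` with `p : Fin d` and `S` a `j`-element subset
of `Fin e`, and `e_S ∧ e_i = (-1)^{#{s ∈ S | i < s}} e_{insert i S}` if `i ∉ S`, else `0`. -/
noncomputable def psiMatrix {R : Type*} [CommRing R] (d e : ℕ)
    (A : Fin e → Matrix (Fin d) (Fin d) R) (j : ℕ) :
    Matrix (Fin d × {T : Finset (Fin e) // T.card = j + 1})
      (Fin d × {S : Finset (Fin e) // S.card = j}) R :=
  Matrix.of fun qT pS =>
    ∑ i : Fin e,
      if i ∉ pS.2.1 ∧ qT.2.1 = insert i pS.2.1 then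
        (-1 : R) ^ (pS.2.1.filter (fun s => i < s)).card * A i qT.1 pS.1
      else 0

/-- `κ_j(A)` is the rank of `ψ_j(A)`. -/
noncomputable def kappa {R : Type*} [CommRing R] (d e : ℕ)
    (A : Fin e → Matrix (Fin d) (Fin d) R) (j : ℕ) : ℕ :=
  (psiMatrix d e A j).rank

open Kronecker

/-- the κ-vector is invariant under linear changes of coordinates. -/
theorem kappa_coord_change {k : Type*} [Field k] (d e : ℕ) (hd : 1 ≤ d) (he : 1 ≤ e)
    (A : Fin e → Matrix (Fin d) (Fin d) k)
    (β : Matrix (Fin d) (Fin d) k) (hβ : IsUnit β)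
    (j : ℕ) (hj : j ≤ e - 1) :
    kappa d e (fun i => βᵀ * A i * β) j = kappa d e A j := by
  classical
  have key : psiMatrix d e (fun i => βᵀ * A i * β) j
      = (βᵀ ⊗ₖ (1 : Matrix {T : Finset (Fin e) // T.card = j + 1}
            {T : Finset (Fin e) // T.card = j + 1} k))
        * psiMatrix d e A j
        * (β ⊗ₖ (1 : Matrix {S : Finset (Fin e) // S.card = j}
            {S : Finset (Fin e) // S.card = j} k)) := by
    ext ⟨q, T⟩ ⟨p, S⟩
    simp only [psiMatrix, Matrix.mul_apply, kroneckerMap_apply, Matrix.of_apply,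
      Matrix.transpose_apply, Matrix.one_apply, Fintype.sum_prod_type, mul_ite, mul_zero, mul_one,
      ite_mul, zero_mul, Finset.sum_ite_eq, Finset.sum_ite_eq', Finset.mem_univ, if_true]
    have hsum : ∀ {ι : Type} (s : Finset ι) (c : Prop) [Decidable c] (f : ι → k),
        (if c then ∑ x ∈ s, f x else 0) = ∑ x ∈ s, if c then f x else 0 := by
      intros; split <;> simp
    simp only [Finset.mul_sum, Finset.sum_mul, mul_ite, ite_mul, mul_zero, zero_mul, hsum]
    conv_lhs => rw [Finset.sum_comm]
    refine Finset.sum_congr rfl fun a _ => ?_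
    conv_lhs => rw [Finset.sum_comm]
    refine Finset.sum_congr rfl fun b _ => ?_
    refine Finset.sum_congr rfl fun i _ => ?_
    split <;> ring
  unfold kappa
  rw [key, rank_mul_eq_left_of_isUnit_det, rank_mul_eq_right_of_isUnit_det]
  · rw [det_kronecker, det_one, one_pow, mul_one, det_transpose]
    exact (hβ.map detMonoidHom).pow _
  · rw [det_kronecker, det_one, one_pow, mul_one]
    exact (hβ.map detMonoidHom).pow _
end

section
/- Let f ≥ 0 and set e = 4f+3. Assume that the binomial coefficient C(4f+3, 2f+1) is odd, that d is odd, and that char k ≠ 2. Then for every tuple A = (A_1, …, A_e) of symmetric d×d matrices over k, one has κ_{2f+1}(A) < d·C(4f+3, 2f+1). -/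
open Matrix

/-- cross count: pairs (x,y), x ∈ X, y ∈ Y with y < x. -/
private def crossN {n : ℕ} (X Y : Finset (Fin n)) : ℕ :=
  ∑ x ∈ X, (Y.filter (fun y => y < x)).card

private lemma cross_add_cross {n : ℕ} {X Y : Finset (Fin n)} (h : Disjoint X Y) :
    crossN X Y + crossN Y X = X.card * Y.card := by
  classical
  unfold crossN
  have e1 : (∑ x ∈ X, (Y.filter (fun y => y < x)).card)
      = ∑ x ∈ X, ∑ y ∈ Y, (if y < x then 1 else 0) := by
    refine Finset.sum_congr rfl fun x _ => ?_
    rw [Finset.card_filter]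
  have e2 : (∑ y ∈ Y, (X.filter (fun x => x < y)).card)
      = ∑ x ∈ X, ∑ y ∈ Y, (if x < y then 1 else 0) := by
    calc ∑ y ∈ Y, (X.filter (fun x => x < y)).card
        = ∑ y ∈ Y, ∑ x ∈ X, (if x < y then 1 else 0) :=
          Finset.sum_congr rfl fun y _ => Finset.card_filter _ _
      _ = ∑ x ∈ X, ∑ y ∈ Y, (if x < y then 1 else 0) := Finset.sum_comm
  rw [e1, e2, ← Finset.sum_add_distrib]
  have key : ∀ x ∈ X, ((∑ y ∈ Y, if y < x then 1 else 0)
      + ∑ y ∈ Y, if x < y then 1 else 0) = Y.card := by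
    intro x hx
    rw [← Finset.sum_add_distrib]
    have : ∀ y ∈ Y, ((if y < x then 1 else 0) + if x < y then 1 else 0) = 1 := by
      intro y hy
      have hne : x ≠ y := fun hxy => (Finset.disjoint_left.1 h hx) (hxy ▸ hy)
      rcases lt_or_gt_of_ne hne with h' | h'
      · simp [h', asymm h']
      · simp [h', asymm h']
    rw [Finset.sum_congr rfl this, Finset.sum_const, smul_eq_mul, mul_one]
  rw [Finset.sum_congr rfl key, Finset.sum_const, smul_eq_mul]

private lemma neg_one_pow_add_eq_zero {k : Type*} [Ring k] {a b : ℕ} (h : Odd (a + b)) :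
    (-1 : k) ^ a + (-1 : k) ^ b = 0 := by
  rcases Nat.even_or_odd a with ha | ha
  · have hb : Odd b := by
      rw [Nat.even_iff] at ha; rw [Nat.odd_iff] at h ⊢; omega
    rw [ha.neg_one_pow, hb.neg_one_pow]; simp
  · have hb : Even b := by
      rw [Nat.odd_iff] at ha h; rw [Nat.even_iff]; omega
    rw [ha.neg_one_pow, hb.neg_one_pow]; simp

private lemma cond_symm {e : ℕ} {S S' : Finset (Fin e)} {i : Fin e}
    (hi : i ∉ S') (hc : Sᶜ = insert i S') : i ∉ S ∧ S'ᶜ = insert i S := by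
  have hiS : i ∉ S := by
    have : i ∈ Sᶜ := hc ▸ Finset.mem_insert_self i S'
    simpa using this
  refine ⟨hiS, ?_⟩
  have hS : S = (insert i S')ᶜ := by rw [← hc, compl_compl]
  rw [hS, Finset.compl_insert, Finset.insert_erase (by simpa using hi)]

/-- crossN with an inserted element splits off. -/
private lemma crossN_insert {n : ℕ} (X Y : Finset (Fin n)) (i : Fin n) (hi : i ∉ Y) :
    crossN X (insert i Y) = crossN X Y + (X.filter (fun s => i < s)).card := by
  classical
  unfold crossN
  have : ∀ x ∈ X, ((insert i Y).filter (fun y => y < x)).card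
      = (Y.filter (fun y => y < x)).card + (if i < x then 1 else 0) := by
    intro x _
    rw [Finset.filter_insert]
    by_cases h : i < x
    · rw [if_pos h, Finset.card_insert_of_notMem (by simp [hi]), if_pos h]
    · rw [if_neg h, if_neg h, Nat.add_zero]
  rw [Finset.sum_congr rfl this, Finset.sum_add_distrib, ← Finset.card_filter]

/-- The sign `ε(S)` defined by `e_S ∧ e_{Sᶜ} = ε(S) e_{[e]}`. -/
private def eps {k : Type*} [Ring k] {n : ℕ} (S : Finset (Fin n)) : k :=
  (-1) ^ (crossN S Sᶜ)

private lemma eps_mul_self {k : Type*} [Ring k] {n : ℕ} (S : Finset (Fin n)) :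
    (eps (k := k) S) * eps (k := k) S = 1 := by
  unfold eps
  rw [← pow_add]
  exact Even.neg_one_pow ⟨_, rfl⟩

private lemma coeff_cancel {k : Type*} [Ring k] (f : ℕ) (S S' : Finset (Fin (4 * f + 3)))
    (hS : S.card = 2 * f + 1) (hS' : S'.card = 2 * f + 1) (i : Fin (4 * f + 3))
    (hi : i ∉ S') (hc : Sᶜ = insert i S') :
    (eps (k := k) S) * (-1) ^ ((S'.filter (fun s => i < s)).card)
      + (eps (k := k) S') * (-1) ^ ((S.filter (fun s => i < s)).card) = 0 := by
  obtain ⟨hiS, hc'⟩ := cond_symm hi hc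
  have hdisj : Disjoint S S' := by
    rw [Finset.disjoint_left]
    intro a ha ha'
    have : a ∈ Sᶜ := by rw [hc]; exact Finset.mem_insert_of_mem ha'
    exact (Finset.mem_compl.1 this) ha
  have k1 : crossN S Sᶜ = crossN S S' + (S.filter (fun s => i < s)).card := by
    rw [hc]; exact crossN_insert S S' i hi
  have k2 : crossN S' S'ᶜ = crossN S' S + (S'.filter (fun s => i < s)).card := by
    rw [hc']; exact crossN_insert S' S i hiS
  unfold eps
  rw [← pow_add, ← pow_add]
  refine neg_one_pow_add_eq_zero ?_
  rw [k1, k2]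
  have hcc : crossN S S' + crossN S' S = (2 * f + 1) * (2 * f + 1) := by
    rw [cross_add_cross hdisj, hS, hS']
  have hoddsq : Odd ((2 * f + 1) * (2 * f + 1)) := ⟨2 * f * f + 2 * f, by ring⟩
  rw [Nat.odd_iff] at hoddsq ⊢
  omega

private lemma rank_lt_card_of_det_eq_zero {K : Type*} [Field K] {I : Type*} [Fintype I]
    [DecidableEq I] {G : Matrix I I K} (h : G.det = 0) : G.rank < Fintype.card I := by
  obtain ⟨v, hv, hGv⟩ := (Matrix.exists_mulVec_eq_zero_iff).2 h
  have hker : v ∈ LinearMap.ker G.mulVecLin := by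
    rw [LinearMap.mem_ker, Matrix.mulVecLin_apply]; exact hGv
  have h1 : 0 < Module.finrank K (LinearMap.ker G.mulVecLin) :=
    Module.finrank_pos_iff_exists_ne_zero.2 ⟨⟨v, hker⟩, by simpa [Subtype.ext_iff] using hv⟩
  have h2 := LinearMap.finrank_range_add_finrank_ker G.mulVecLin
  have h3 : Module.finrank K (I → K) = Fintype.card I := Module.finrank_pi K
  rw [Matrix.rank]
  omega

theorem kappa_middle_lt {k : Type*} [Field k] (hchar : ringChar k ≠ 2)
    (f d : ℕ) (hd : Odd d)
    (hodd : Odd (Nat.choose (4 * f + 3) (2 * f + 1)))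
    (A : Fin (4 * f + 3) → Matrix (Fin d) (Fin d) k) (hsymm : ∀ i, (A i).IsSymm) :
    kappa d (4 * f + 3) A (2 * f + 1) < d * Nat.choose (4 * f + 3) (2 * f + 1) := by
  classical
  set M := psiMatrix d (4 * f + 3) A (2 * f + 1) with hM
  have hcompl : ∀ S : {S : Finset (Fin (4 * f + 3)) // S.card = 2 * f + 1},
      (S.1ᶜ).card = 2 * f + 1 + 1 := by
    intro S
    rw [Finset.card_compl, S.2, Fintype.card_fin]
    omega
  have hcompl' : ∀ T : {T : Finset (Fin (4 * f + 3)) // T.card = 2 * f + 1 + 1},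
      (T.1ᶜ).card = 2 * f + 1 := by
    intro T
    rw [Finset.card_compl, T.2, Fintype.card_fin]
    omega
  set cc : (Fin d × {S : Finset (Fin (4 * f + 3)) // S.card = 2 * f + 1}) →
      (Fin d × {T : Finset (Fin (4 * f + 3)) // T.card = 2 * f + 1 + 1}) :=
    fun x => (x.1, ⟨x.2.1ᶜ, hcompl x.2⟩) with hccdef
  set N : Matrix (Fin d × {S : Finset (Fin (4 * f + 3)) // S.card = 2 * f + 1})
      (Fin d × {T : Finset (Fin (4 * f + 3)) // T.card = 2 * f + 1 + 1}) k :=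
    Matrix.of (fun x y => if y = cc x then eps x.2.1 else 0) with hN
  set N' : Matrix (Fin d × {T : Finset (Fin (4 * f + 3)) // T.card = 2 * f + 1 + 1})
      (Fin d × {S : Finset (Fin (4 * f + 3)) // S.card = 2 * f + 1}) k :=
    Matrix.of (fun y x => if y = cc x then eps x.2.1 else 0) with hN'
  set G := N * M with hG
  -- entrywise formula for G
  have hGent : ∀ x z, G x z = eps (k := k) x.2.1 * M (cc x) z := by
    intro x z
    rw [hG, Matrix.mul_apply]
    rw [Finset.sum_eq_single (cc x)]
    · rw [hN, Matrix.of_apply, if_pos rfl]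
    · intro b _ hb
      rw [hN, Matrix.of_apply, if_neg hb, zero_mul]
    · intro h
      exact absurd (Finset.mem_univ _) h
  -- N' is a left inverse of N
  have hN'N : N' * N = 1 := by
    ext y y'
    rw [Matrix.mul_apply]
    set x₀ : Fin d × {S : Finset (Fin (4 * f + 3)) // S.card = 2 * f + 1} :=
      (y.1, ⟨y.2.1ᶜ, hcompl' y.2⟩) with hx₀
    have hccx₀ : cc x₀ = y := by
      rw [hccdef, hx₀]
      exact Prod.ext rfl (Subtype.ext (compl_compl _))
    rw [Finset.sum_eq_single x₀]
    · rw [hN', hN, Matrix.of_apply, Matrix.of_apply, hccx₀, if_pos rfl]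
      by_cases h : y' = y
      · rw [if_pos h, eps_mul_self, h, Matrix.one_apply_eq]
      · rw [if_neg h, mul_zero, Matrix.one_apply_ne (fun hh => h hh.symm)]
    · intro x _ hx
      rw [hN', Matrix.of_apply, if_neg, zero_mul]
      intro hyx
      apply hx
      rw [hx₀, hyx]
      simp only [hccdef]
      exact Prod.ext rfl (Subtype.ext (compl_compl _).symm)
    · intro h; exact absurd (Finset.mem_univ _) h
  -- skew symmetry of G
  have hskew : ∀ x z, G x z + G z x = 0 := by
    intro x z
    rw [hGent x z, hGent z x, hM]
    simp only [psiMatrix, Matrix.of_apply, hccdef]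
    rw [Finset.mul_sum, Finset.mul_sum, ← Finset.sum_add_distrib]
    refine Finset.sum_eq_zero fun i _ => ?_
    by_cases hcond : i ∉ z.2.1 ∧ x.2.1ᶜ = insert i z.2.1
    · obtain ⟨hc1, hc2⟩ := cond_symm hcond.1 hcond.2
      rw [if_pos hcond, if_pos ⟨hc1, hc2⟩, (hsymm i).apply x.1 z.1]
      have hcc := coeff_cancel (k := k) f x.2.1 z.2.1 x.2.2 z.2.2 i hcond.1 hcond.2
      linear_combination (A i x.1 z.1) * hcc
    · rw [if_neg hcond, if_neg (fun h => hcond (cond_symm h.1 h.2)), mul_zero, mul_zero,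
        add_zero]
  -- G is antisymmetric, of odd size, hence singular
  have hT : Gᵀ = -G := by
    ext x z
    rw [Matrix.transpose_apply, Matrix.neg_apply]
    linear_combination hskew z x
  have hcardI : Fintype.card (Fin d × {S : Finset (Fin (4 * f + 3)) // S.card = 2 * f + 1})
      = d * Nat.choose (4 * f + 3) (2 * f + 1) := by
    rw [Fintype.card_prod, Fintype.card_fin, Fintype.card_finset_len, Fintype.card_fin]
  have hoddI :
      Odd (Fintype.card (Fin d × {S : Finset (Fin (4 * f + 3)) // S.card = 2 * f + 1})) := by
    rw [hcardI]; exact hd.mul hodd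
  have hdet : G.det = 0 := by
    have h1 : G.det = -G.det := by
      conv_lhs => rw [← Matrix.det_transpose G, hT]
      rw [Matrix.det_neg, hoddI.neg_one_pow, neg_one_mul]
    have h2 : (2 : k) * G.det = 0 := by linear_combination h1
    exact (mul_eq_zero.1 h2).resolve_left (Ring.two_ne_zero hchar)
  have hrank1 : M.rank ≤ G.rank := by
    have hMeq : M = N' * G := by rw [hG, ← Matrix.mul_assoc, hN'N, Matrix.one_mul]
    calc M.rank = (N' * G).rank := by rw [← hMeq]
      _ ≤ G.rank := Matrix.rank_mul_le_right N' G
  have hlt := rank_lt_card_of_det_eq_zero hdet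
  rw [hcardI] at hlt
  have hk : kappa d (4 * f + 3) A (2 * f + 1) = M.rank := rfl
  rw [hk]
  exact lt_of_le_of_lt hrank1 hlt
end

section
/- Suppose A = (A_1, …, A_e) is a tuple of d×d matrices over k with A_e equal to the identity matrix I_d. Then for every 1 ≤ j ≤ e−1, κ_j(A_1, …, A_e) = d·C(e−1, j) + rank( ψ_j(A_1, …, A_{e−1}) ∘ ψ_{j−1}(A_1, …, A_{e−1}) ), where the composition is taken after identifying all the spaces k^d ⊗ Λ^m(k^{e−1}) with coordinate spaces via the standard bases. -/
/-!
Split the standard basis of `k^d ⊗ Λ^•(k^e)` according to whether `e_e` occurs. Because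
`A_e = 1`, the `i = e` term of `ψ_j(A)` sends `u ⊗ E` to `u ⊗ (E ∧ e_e)`, and moving `e_e` past
`e_i` costs a sign, so in the adapted bases `ψ_j(A)` is the block matrix
`[[ψ_j(B), 0], [1, -ψ_{j-1}(B)]]` with `B = (A_1, …, A_{e-1})`. Block row and column operations
turn it into `[[0, ψ_j(B) ψ_{j-1}(B)], [1, 0]]`, whose identity block has size `d·C(e-1, j)`.
-/

open Matrix

namespace Fin

variable {n m : ℕ}

theorem exists_map_castSuccEmb_eq {T : Finset (Fin (n + 1))} (h : last n ∉ T) :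
    ∃ S : Finset (Fin n), S.map castSuccEmb = T := by
  have hT : T ⊆ Finset.univ.map castSuccEmb := by
    intro x hx
    rw [← Iio_last_eq_map, Finset.mem_Iio]
    exact (le_last x).lt_of_ne (ne_of_mem_of_not_mem hx h)
  obtain ⟨S, -, rfl⟩ := Finset.subset_map_iff.1 hT
  exact ⟨S, rfl⟩

theorem last_notMem_map_castSuccEmb (S : Finset (Fin n)) : last n ∉ S.map castSuccEmb := by
  simp [castSucc_ne_last]

def liftSubset (S : {S : Finset (Fin n) // S.card = m}) :
    {T : Finset (Fin (n + 1)) // T.card = m} :=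
  ⟨S.1.map castSuccEmb, by simp [S.2]⟩

def insertLastSubset (S : {S : Finset (Fin n) // S.card = m}) :
    {T : Finset (Fin (n + 1)) // T.card = m + 1} :=
  ⟨insert (last n) (S.1.map castSuccEmb), by
    rw [Finset.card_insert_of_notMem (last_notMem_map_castSuccEmb _), Finset.card_map, S.2]⟩

theorem card_filter_castSucc_lt_map (i : Fin n) (S : Finset (Fin n)) :
    ((S.map castSuccEmb).filter (fun s => i.castSucc < s)).card =
      (S.filter (fun s => i < s)).card := by
  simp [Finset.filter_map, Function.comp_def]

theorem map_castSuccEmb_eq_insert_iff (i : Fin n) (S S' : Finset (Fin n)) :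
    S'.map castSuccEmb = insert i.castSucc (S.map castSuccEmb) ↔ S' = insert i S := by
  rw [← castSuccEmb_apply, ← Finset.map_insert, Finset.map_inj]

theorem map_castSuccEmb_ne_of_last_mem {S : Finset (Fin n)} {T : Finset (Fin (n + 1))}
    (h : last n ∈ T) : S.map castSuccEmb ≠ T :=
  fun hST => last_notMem_map_castSuccEmb S (hST ▸ h)

theorem insert_last_ne_insert_castSucc (i : Fin n) (S : Finset (Fin (n + 1)))
    (T : Finset (Fin n)) : insert (last n) S ≠ insert i.castSucc (T.map castSuccEmb) := by
  intro h
  have hmem := h ▸ Finset.mem_insert_self (last n) S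
  simp [(castSucc_ne_last i).symm] at hmem

theorem insert_last_map_castSuccEmb_inj {S S' : Finset (Fin n)} :
    insert (last n) (S'.map castSuccEmb) = insert (last n) (S.map castSuccEmb) ↔ S' = S := by
  refine ⟨fun h => ?_, fun h => h ▸ rfl⟩
  have h' := congrArg (fun T => T.erase (last n)) h
  simpa only [Finset.erase_insert (last_notMem_map_castSuccEmb _), Finset.map_inj] using h'

theorem insert_last_map_eq_insert_castSucc_iff (i : Fin n) (S S' : Finset (Fin n)) :
    insert (last n) (S'.map castSuccEmb) =
        insert i.castSucc (insert (last n) (S.map castSuccEmb)) ↔ S' = insert i S := by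
  rw [Finset.insert_comm, ← castSuccEmb_apply, ← Finset.map_insert, insert_last_map_castSuccEmb_inj]

theorem card_filter_castSucc_lt_insert_last (i : Fin n) (S : Finset (Fin n)) :
    ((insert (last n) (S.map castSuccEmb)).filter (fun s => i.castSucc < s)).card =
      (S.filter (fun s => i < s)).card + 1 := by
  rw [Finset.filter_insert, if_pos (castSucc_lt_last i), Finset.card_insert_of_notMem
    (fun h => last_notMem_map_castSuccEmb S (Finset.mem_filter.1 h).1),
    card_filter_castSucc_lt_map]

theorem filter_last_lt (S : Finset (Fin (n + 1))) : S.filter (fun s => last n < s) = ∅ :=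
  Finset.filter_false_of_mem fun s _ => not_lt.2 (le_last s)

noncomputable def subsetsSumEquiv (n m : ℕ) :
    {S : Finset (Fin n) // S.card = m + 1} ⊕ {S : Finset (Fin n) // S.card = m} ≃
      {T : Finset (Fin (n + 1)) // T.card = m + 1} :=
  Equiv.ofBijective (Sum.elim liftSubset insertLastSubset) <| by
    refine ⟨Function.Injective.sumElim ?_ ?_ ?_, ?_⟩
    · intro S S' h
      exact Subtype.ext (Finset.map_injective _ (congrArg Subtype.val h))
    · intro S S' h
      have h' := congrArg (fun T => T.1.erase (last n)) h
      simp only [insertLastSubset, Finset.erase_insert (last_notMem_map_castSuccEmb _)] at h'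
      exact Subtype.ext (Finset.map_injective _ h')
    · intro S S' h
      have hmem : last n ∈ (liftSubset S).1 := h ▸ Finset.mem_insert_self _ _
      exact last_notMem_map_castSuccEmb S.1 hmem
    · rintro ⟨T, hT⟩
      by_cases h : last n ∈ T
      · obtain ⟨S, hS⟩ := exists_map_castSuccEmb_eq (Finset.notMem_erase (last n) T)
        refine ⟨Sum.inr ⟨S, ?_⟩, Subtype.ext ?_⟩
        · rw [← Finset.card_map castSuccEmb, hS, Finset.card_erase_of_mem h, hT]; rfl
        · simp [insertLastSubset, hS, Finset.insert_erase h]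
      · obtain ⟨S, rfl⟩ := exists_map_castSuccEmb_eq h
        exact ⟨Sum.inl ⟨S, by simpa using hT⟩, rfl⟩

noncomputable def prodSubsetsSumEquiv (d n m : ℕ) :
    (Fin d × {S : Finset (Fin n) // S.card = m + 1}) ⊕ (Fin d × {S : Finset (Fin n) // S.card = m})
      ≃ Fin d × {T : Finset (Fin (n + 1)) // T.card = m + 1} :=
  (Equiv.prodSumDistrib _ _ _).symm.trans ((Equiv.refl _).prodCongr (subsetsSumEquiv n m))

end Fin

section Rank

variable {k : Type*} [Field k]

theorem LinearMap.finrank_range_prodMap {M N M' N' : Type*} [AddCommGroup M] [AddCommGroup N]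
    [AddCommGroup M'] [AddCommGroup N'] [Module k M] [Module k N] [Module k M'] [Module k N']
    [FiniteDimensional k M'] [FiniteDimensional k N'] (f : M →ₗ[k] M') (g : N →ₗ[k] N') :
    Module.finrank k (range (f.prodMap g)) =
      Module.finrank k (range f) + Module.finrank k (range g) := by
  have hfactor : f.prodMap g = (f.range.subtype.prodMap g.range.subtype).comp
      (f.rangeRestrict.prodMap g.rangeRestrict) := by
    ext <;> simp
  have hinj : Function.Injective (f.range.subtype.prodMap g.range.subtype) :=
    Prod.map_injective.2 ⟨Subtype.val_injective, Subtype.val_injective⟩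
  rw [hfactor, range_comp_of_range_eq_top _ (by simp [range_prodMap]),
    finrank_range_of_inj hinj, Module.finrank_prod]

theorem Matrix.rank_fromBlocks_zero_zero {a b c e : Type*} [Fintype a] [Fintype b]
    [Fintype c] [Fintype e] (A : Matrix a b k) (D : Matrix c e k) :
    (fromBlocks A 0 0 D).rank = A.rank + D.rank := by
  have hconj : (fromBlocks A 0 0 D).mulVecLin =
      (LinearEquiv.sumArrowLequivProdArrow a c k k).symm.toLinearMap ∘ₗ
        (A.mulVecLin.prodMap D.mulVecLin) ∘ₗ
        (LinearEquiv.sumArrowLequivProdArrow b e k k).toLinearMap := by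
    ext v (x | x) <;>
      simp [fromBlocks_mulVec, LinearEquiv.sumArrowLequivProdArrow, Equiv.sumArrowEquivProdArrow]
  rw [rank, hconj, LinearMap.range_comp, LinearMap.range_comp, LinearEquiv.range,
    Submodule.map_top, LinearEquiv.finrank_map_eq, LinearMap.finrank_range_prodMap, rank, rank]

theorem Matrix.rank_fromBlocks_zero_one_neg {a b c : Type*} [Fintype a] [Fintype b] [Fintype c]
    [DecidableEq a] [DecidableEq b] [DecidableEq c] (X : Matrix a b k) (Y : Matrix b c k) :
    (fromBlocks X 0 1 (-Y)).rank = Fintype.card b + (X * Y).rank := by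
  have hrow : IsUnit (fromBlocks (1 : Matrix a a k) (-X) 0 (1 : Matrix b b k)).det := by simp
  have hcol : IsUnit (fromBlocks (1 : Matrix b b k) Y 0 (1 : Matrix c c k)).det := by simp
  have hreduce : fromBlocks (1 : Matrix a a k) (-X) 0 1 * fromBlocks X 0 1 (-Y) *
      fromBlocks (1 : Matrix b b k) Y 0 (1 : Matrix c c k) =
      (fromBlocks 1 0 0 (X * Y)).submatrix (Equiv.sumComm a b) (Equiv.refl (b ⊕ c)) := by
    simp only [fromBlocks_multiply]
    ext (i | i) (j | j) <;> simp [Matrix.neg_mul, Matrix.mul_neg]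
  rw [← rank_mul_eq_right_of_isUnit_det _ _ hrow, ← rank_mul_eq_left_of_isUnit_det _ _ hcol,
    hreduce, rank_submatrix, rank_fromBlocks_zero_zero, rank_one]

end Rank

section PsiMatrixSplit

open Fin

variable {R : Type*} [CommRing R] {d n : ℕ} (A : Fin (n + 1) → Matrix (Fin d) (Fin d) R)

theorem psiMatrix_apply_liftSubset_liftSubset {m : ℕ} (q p : Fin d)
    (T : {T : Finset (Fin n) // T.card = m + 1}) (S : {S : Finset (Fin n) // S.card = m}) :
    psiMatrix d (n + 1) A m (q, liftSubset T) (p, liftSubset S) =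
      psiMatrix d n (fun i => A i.castSucc) m (q, T) (p, S) := by
  simp [psiMatrix, liftSubset, sum_univ_castSucc, map_castSuccEmb_eq_insert_iff,
    card_filter_castSucc_lt_map, map_castSuccEmb_ne_of_last_mem]

theorem psiMatrix_apply_liftSubset_insertLastSubset {m : ℕ} (q p : Fin d)
    (T : {T : Finset (Fin n) // T.card = m + 2}) (S : {S : Finset (Fin n) // S.card = m}) :
    psiMatrix d (n + 1) A (m + 1) (q, liftSubset T) (p, insertLastSubset S) = 0 := by
  simp [psiMatrix, liftSubset, insertLastSubset, sum_univ_castSucc,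
    map_castSuccEmb_ne_of_last_mem]

theorem psiMatrix_apply_insertLastSubset_liftSubset {m : ℕ} (q p : Fin d)
    (T S : {S : Finset (Fin n) // S.card = m}) :
    psiMatrix d (n + 1) A m (q, insertLastSubset T) (p, liftSubset S) =
      if T = S then A (last n) q p else 0 := by
  simp [psiMatrix, liftSubset, insertLastSubset, sum_univ_castSucc,
    insert_last_ne_insert_castSucc, insert_last_map_castSuccEmb_inj, filter_last_lt,
    Subtype.ext_iff]

theorem psiMatrix_apply_insertLastSubset_insertLastSubset {m : ℕ} (q p : Fin d)
    (T : {T : Finset (Fin n) // T.card = m + 1}) (S : {S : Finset (Fin n) // S.card = m}) :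
    psiMatrix d (n + 1) A (m + 1) (q, insertLastSubset T) (p, insertLastSubset S) =
      -psiMatrix d n (fun i => A i.castSucc) m (q, T) (p, S) := by
  simp [psiMatrix, insertLastSubset, sum_univ_castSucc, ← Finset.sum_neg_distrib,
    insert_last_map_eq_insert_castSucc_iff, card_filter_castSucc_lt_insert_last, pow_succ,
    apply_ite]

theorem psiMatrix_submatrix_prodSubsetsSumEquiv (hA : A (last n) = 1) (m : ℕ) :
    (psiMatrix d (n + 1) A (m + 1)).submatrix (prodSubsetsSumEquiv d n (m + 1))
        (prodSubsetsSumEquiv d n m) =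
      fromBlocks (psiMatrix d n (fun i => A i.castSucc) (m + 1)) 0 1
        (-psiMatrix d n (fun i => A i.castSucc) m) := by
  ext (⟨q, T⟩ | ⟨q, T⟩) (⟨p, S⟩ | ⟨p, S⟩)
  · exact psiMatrix_apply_liftSubset_liftSubset A q p T S
  · exact psiMatrix_apply_liftSubset_insertLastSubset A q p T S
  · rw [submatrix_apply, fromBlocks_apply₂₁]
    exact (psiMatrix_apply_insertLastSubset_liftSubset A q p T S).trans (by
      simp [hA, one_apply, Prod.ext_iff, ite_and]; split_ifs <;> rfl)
  · exact psiMatrix_apply_insertLastSubset_insertLastSubset A q p T S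

end PsiMatrixSplit

/-- if the last matrix of the tuple is the identity, then for `1 ≤ j ≤ e-1`
(written `j = j'+1`), `κ_j(A) = d·C(e-1,j) + rank(ψ_j(A₁,…,A_{e-1}) ∘ ψ_{j-1}(A₁,…,A_{e-1}))`. -/
theorem kappa_of_last_eq_one {k : Type*} [Field k] (d e : ℕ) (he : 2 ≤ e)
    (A : Fin e → Matrix (Fin d) (Fin d) k)
    (hA : A ⟨e - 1, by omega⟩ = 1)
    (j : ℕ) :
    kappa d e A (j + 1) =
      d * Nat.choose (e - 1) (j + 1) +
        (psiMatrix d (e - 1) (fun i => A (Fin.castLE (Nat.sub_le e 1) i)) (j + 1) *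
          psiMatrix d (e - 1) (fun i => A (Fin.castLE (Nat.sub_le e 1) i)) j).rank := by
  obtain ⟨n, rfl⟩ : ∃ n, e = n + 1 := ⟨e - 1, by omega⟩
  show (psiMatrix d (n + 1) A (j + 1)).rank = d * n.choose (j + 1) +
    (psiMatrix d n (fun i => A i.castSucc) (j + 1) * psiMatrix d n (fun i => A i.castSucc) j).rank
  rw [← rank_submatrix _ (Fin.prodSubsetsSumEquiv d n (j + 1)) (Fin.prodSubsetsSumEquiv d n j),
    psiMatrix_submatrix_prodSubsetsSumEquiv A hA, rank_fromBlocks_zero_one_neg,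
    Fintype.card_prod, Fintype.card_fin, Fintype.card_finset_len, Fintype.card_fin]
end

section
/- For any two d×d matrices B, C over k, one has κ_1(B, C, I_d) = 2d + rank(BC − CB), where I_d is the identity matrix. More precisely, under the standard identifications, the composition ψ_1(B, C) ∘ ψ_0(B, C) : k^d → k^d ⊗ Λ²(k²) ≅ k^d equals the commutator CB − BC. -/
/-!
Ordering the basis of `k^d ⊗ Λ²(k³)` as `e_{02}, e_{12}, e_{01}` and that of `k^d ⊗ Λ¹(k³)` as
`e_0, e_1, e_2`, the matrix of `ψ_1(B, C, I)` becomes `[[I, Q], [R, 0]]` with `Q = [[-B], [-C]]`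
and `R = [C, -B]`. Since the `2d × 2d` block is the identity, block elimination leaves its Schur
complement `-R Q = CB - BC`, so the rank is `2d + rank(BC - CB)`. The identity
`ψ_1(B, C) ∘ ψ_0(B, C) = CB - BC` is a direct computation of the two paths from `e_∅` to
`e_{01}` through `e_0` and `e_1`.
-/

open Matrix

theorem Submodule.finrank_prod {K M M₂ : Type*} [DivisionRing K] [AddCommGroup M]
    [AddCommGroup M₂] [Module K M] [Module K M₂] (p : Submodule K M) (q : Submodule K M₂)
    [FiniteDimensional K p] [FiniteDimensional K q] :
    Module.finrank K (p.prod q) = Module.finrank K p + Module.finrank K q := by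
  have hinj : Function.Injective (p.subtype.prodMap q.subtype) :=
    Prod.map_injective.2 ⟨p.injective_subtype, q.injective_subtype⟩
  rw [← Module.finrank_prod, ← LinearMap.finrank_range_of_inj hinj, LinearMap.range_prodMap,
    Submodule.range_subtype, Submodule.range_subtype]

noncomputable def Finset.singletonEquiv (α : Type*) : α ≃ {s : Finset α // s.card = 1} :=
  Equiv.ofBijective (fun a => ⟨{a}, card_singleton a⟩)
    ⟨fun _ _ h => singleton_injective (congrArg Subtype.val h),
      fun ⟨_, hs⟩ => (card_eq_one.1 hs).imp fun _ ha => Subtype.ext ha.symm⟩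

namespace Matrix

theorem rank_neg {m n R : Type*} [Fintype n] [CommRing R] (A : Matrix m n R) :
    (-A).rank = A.rank := by
  rw [← neg_one_smul R A, rank_smul_of_mem_nonZeroDivisors]
  exact isUnit_one.neg.mem_nonZeroDivisors

theorem rank_fromBlocks_zero_zero_s5 {m n m' n' K : Type*} [Fintype m'] [Fintype n'] [Field K]
    (A : Matrix m m' K) (D : Matrix n n' K) :
    (fromBlocks A 0 0 D).rank = A.rank + D.rank := by
  have hF : (fromBlocks A 0 0 D).mulVecLin =
      (LinearEquiv.sumArrowLequivProdArrow m n K K).symm.toLinearMap ∘ₗ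
        (A.mulVecLin.prodMap D.mulVecLin) ∘ₗ
        (LinearEquiv.sumArrowLequivProdArrow m' n' K K).toLinearMap := by
    ext v (i | i) <;>
      simp [fromBlocks_mulVec, LinearEquiv.sumArrowLequivProdArrow, Equiv.sumArrowEquivProdArrow]
  rw [rank, rank, rank, hF, LinearMap.range_comp, LinearMap.range_comp, LinearEquiv.range,
    Submodule.map_top, LinearMap.range_prodMap, LinearEquiv.finrank_map_eq,
    Submodule.finrank_prod]

theorem rank_fromBlocks_one {m n K : Type*} [Fintype m] [Fintype n] [DecidableEq m]
    [DecidableEq n] [Field K] (B : Matrix m n K) (C : Matrix n m K) (D : Matrix n n K) :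
    (fromBlocks 1 B C D).rank = Fintype.card m + (D - C * B).rank := by
  let _ : Invertible (1 : Matrix m m K) := invertibleOne
  have hL : IsUnit (fromBlocks 1 0 C 1 : Matrix (m ⊕ n) (m ⊕ n) K).det := by
    simp
  have hU : IsUnit (fromBlocks 1 B 0 1 : Matrix (m ⊕ n) (m ⊕ n) K).det := by
    simp
  have hschur := fromBlocks_eq_of_invertible₁₁ (1 : Matrix m m K) B C D
  rw [invOf_one, Matrix.mul_one, Matrix.one_mul] at hschur
  rw [hschur, rank_mul_eq_left_of_isUnit_det _ _ hU, rank_mul_eq_right_of_isUnit_det _ _ hL,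
    rank_fromBlocks_zero_zero_s5, rank_one]

end Matrix

def pairsOfFinThreeEquiv (d : ℕ) :
    (Fin d ⊕ Fin d) ⊕ Fin d ≃ Fin d × {T : Finset (Fin 3) // T.card = 2} where
  toFun := Sum.elim (Sum.elim (·, ⟨{0, 2}, rfl⟩) (·, ⟨{1, 2}, rfl⟩)) (·, ⟨{0, 1}, rfl⟩)
  invFun x := if x.2.1 = {0, 2} then .inl (.inl x.1) else
    if x.2.1 = {1, 2} then .inl (.inr x.1) else .inr x.1
  left_inv := by rintro ((p | p) | p) <;> simp +decide
  right_inv := by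
    rintro ⟨p, T, hT⟩
    obtain rfl | rfl | rfl : T = {0, 2} ∨ T = {1, 2} ∨ T = {0, 1} := by revert T; decide
    all_goals simp +decide

def singletonsOfFinThreeEquiv (d : ℕ) :
    (Fin d ⊕ Fin d) ⊕ Fin d ≃ Fin d × {S : Finset (Fin 3) // S.card = 1} where
  toFun := Sum.elim (Sum.elim (·, ⟨{0}, rfl⟩) (·, ⟨{1}, rfl⟩)) (·, ⟨{2}, rfl⟩)
  invFun x := if x.2.1 = {0} then .inl (.inl x.1) else
    if x.2.1 = {1} then .inl (.inr x.1) else .inr x.1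
  left_inv := by rintro ((p | p) | p) <;> simp +decide
  right_inv := by
    rintro ⟨p, S, hS⟩
    obtain rfl | rfl | rfl : S = {0} ∨ S = {1} ∨ S = {2} := by revert S; decide
    all_goals simp +decide

theorem psiMatrix_three_one_submatrix {R : Type*} [CommRing R] {d : ℕ}
    (B C : Matrix (Fin d) (Fin d) R) :
    (psiMatrix d 3 ![B, C, 1] 1).submatrix (pairsOfFinThreeEquiv d) (singletonsOfFinThreeEquiv d) =
      fromBlocks 1 (fromRows (-B) (-C)) (fromCols C (-B)) 0 := by
  -- the `cons_val` simproc panics on `![B, C, 1] 2`, hence `-cons_val` and `cons_val_two`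
  ext ((p | p) | p) ((q | q) | q) <;>
    simp +decide [-cons_val, psiMatrix, pairsOfFinThreeEquiv, singletonsOfFinThreeEquiv,
      Fin.sum_univ_three, one_apply, cons_val_two]

theorem kappa_three_one {K : Type*} [Field K] {d : ℕ} (B C : Matrix (Fin d) (Fin d) K) :
    kappa d 3 ![B, C, 1] 1 = 2 * d + (B * C - C * B).rank := by
  have hschur : 0 - fromCols C (-B) * fromRows (-B) (-C) = -(B * C - C * B) := by
    rw [fromCols_mul_fromRows, Matrix.mul_neg, Matrix.neg_mul, Matrix.mul_neg, neg_neg]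
    abel
  rw [kappa, ← rank_submatrix _ (pairsOfFinThreeEquiv d) (singletonsOfFinThreeEquiv d),
    psiMatrix_three_one_submatrix, rank_fromBlocks_one, hschur, rank_neg, Fintype.card_sum,
    Fintype.card_fin, two_mul]

theorem psiMatrix_two_one_mul_zero {R : Type*} [CommRing R] {d : ℕ}
    (B C : Matrix (Fin d) (Fin d) R) :
    psiMatrix d 2 ![B, C] 1 * psiMatrix d 2 ![B, C] 0 =
      Matrix.of (fun qT pS => (C * B - B * C) qT.1 pS.1) := by
  ext ⟨r, T, hT⟩ ⟨s, S, hS⟩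
  obtain rfl : T = {0, 1} := by revert T; decide
  obtain rfl : S = ∅ := Finset.card_eq_zero.mp hS
  rw [mul_apply, Fintype.sum_prod_type, of_apply, Matrix.sub_apply, mul_apply, mul_apply,
    ← Finset.sum_sub_distrib]
  refine Finset.sum_congr rfl fun p _ => ?_
  rw [← (Finset.singletonEquiv (Fin 2)).sum_comp, Fin.sum_univ_two]
  simp +decide [psiMatrix, Finset.singletonEquiv]
  ring

theorem kappa_one_of_commutator_general {k : Type*} [Field k] (d : ℕ)
    (B C : Matrix (Fin d) (Fin d) k) :
    kappa d 3 ![B, C, 1] 1 = 2 * d + (B * C - C * B).rank ∧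
    psiMatrix d 2 ![B, C] 1 * psiMatrix d 2 ![B, C] 0 =
      Matrix.of (fun qT pS => (C * B - B * C) qT.1 pS.1) :=
  ⟨kappa_three_one B C, psiMatrix_two_one_mul_zero B C⟩

/-- for the tuple `(B, C, I_d)`, `κ_1 = 2d + rank(BC - CB)`; more precisely, the
composition `ψ_1(B,C) ∘ ψ_0(B,C)` equals the commutator `CB - BC` under the standard
identifications `Λ⁰(k²) ≅ k` and `Λ²(k²) ≅ k`. -/
theorem kappa_one_of_commutator {k : Type*} [Field k] (d : ℕ) (hd : 1 ≤ d)
    (B C : Matrix (Fin d) (Fin d) k) :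
    kappa d 3 ![B, C, 1] 1 = 2 * d + (B * C - C * B).rank ∧
    psiMatrix d 2 ![B, C] 1 * psiMatrix d 2 ![B, C] 0 =
      Matrix.of (fun qT pS => (C * B - B * C) qT.1 pS.1) :=
  kappa_one_of_commutator_general d B C
end

section
/- Let k be an algebraically closed field with char k ∉ {2, 3} and let d ≥ 2. Call a d×d matrix N antidiagonal if N_{ij} = 0 whenever i + j ≠ d + 1. Then there exist a diagonal matrix D and a symmetric antidiagonal matrix N over k such that rank(ND − DN) = d if d is even, and rank(ND − DN) = d − 1 if d is odd. Moreover, if d is odd then rank(ND − DN) ≤ d − 1 for every diagonal matrix D and every antidiagonal matrix N over k. -/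
open Matrix

/-- over an algebraically closed field of characteristic `∉ {2,3}`, there exist a
diagonal matrix `D` and a symmetric antidiagonal matrix `N` with `rank(ND - DN) = d` for `d`
even and `= d - 1` for `d` odd; moreover for `d` odd, `rank(ND - DN) ≤ d - 1` for every
diagonal `D` and antidiagonal `N`.  (Indices are 0-based, so the antidiagonal condition
`i + j = d + 1` of 1-based indexing becomes `i + j + 1 = d`.) -/
theorem antidiag_commutator_rank {k : Type*} [Field k] [IsAlgClosed k]
    (hc2 : ringChar k ≠ 2) (hc3 : ringChar k ≠ 3) (d : ℕ) (hd : 2 ≤ d) :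
    (∃ D N : Matrix (Fin d) (Fin d) k,
      (∀ i j : Fin d, i ≠ j → D i j = 0) ∧ N.IsSymm ∧
      (∀ i j : Fin d, (i : ℕ) + (j : ℕ) + 1 ≠ d → N i j = 0) ∧
      (N * D - D * N).rank = if Even d then d else d - 1) ∧
    (Odd d → ∀ D N : Matrix (Fin d) (Fin d) k,
      (∀ i j : Fin d, i ≠ j → D i j = 0) →
      (∀ i j : Fin d, (i : ℕ) + (j : ℕ) + 1 ≠ d → N i j = 0) →
      (N * D - D * N).rank ≤ d - 1) := by
  classical
  have hrev : ∀ i j : Fin d, ((i : ℕ) + (j : ℕ) + 1 = d ↔ j = i.rev) := by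
    intro i j
    rw [Fin.ext_iff, Fin.val_rev]
    have := i.isLt; have := j.isLt
    omega
  constructor
  · -- existence
    set f : Fin d → k := fun i => Infinite.natEmbedding k i with hfdef
    have hf : Function.Injective f := fun a b h =>
      Fin.val_injective ((Infinite.natEmbedding k).injective h)
    set c : Fin d → k := fun j => f j - f j.rev with hcdef
    refine ⟨Matrix.diagonal f, Matrix.of (fun (i j : Fin d) => if (i : ℕ) + (j : ℕ) + 1 = d then (1:k) else 0),
      fun i j hij => Matrix.diagonal_apply_ne f hij, ?_, ?_, ?_⟩
    · ext i j
      simp only [Matrix.transpose_apply, Matrix.of_apply]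
      exact if_congr (by omega) rfl rfl
    · intro i j h
      simp only [Matrix.of_apply, if_neg h]
    · have key : (Matrix.of (fun (i j : Fin d) => if (i : ℕ) + (j : ℕ) + 1 = d then (1:k) else 0) *
          Matrix.diagonal f - Matrix.diagonal f *
          Matrix.of (fun (i j : Fin d) => if (i : ℕ) + (j : ℕ) + 1 = d then (1:k) else 0)) =
          (Matrix.diagonal c).submatrix ⇑(Fin.revPerm (n := d)) ⇑(Equiv.refl (Fin d)) := by
        ext i j
        simp only [Matrix.sub_apply, Matrix.mul_diagonal, Matrix.diagonal_mul,
          Matrix.of_apply, Matrix.submatrix_apply, Equiv.refl_apply, Fin.revPerm_apply]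
        by_cases h : (i : ℕ) + (j : ℕ) + 1 = d
        · have hj : j = i.rev := (hrev i j).mp h
          subst hj
          rw [if_pos h, Matrix.diagonal_apply_eq]
          simp only [hcdef, Fin.rev_rev]
          ring
        · have hj : i.rev ≠ j := fun hh => h ((hrev i j).mpr hh.symm)
          rw [if_neg h, Matrix.diagonal_apply_ne _ hj]
          ring
      rw [key, Matrix.rank_submatrix, Matrix.rank_diagonal]
      have hcne : ∀ j : Fin d, c j ≠ 0 ↔ ¬ j = j.rev := by
        intro j
        simp only [hcdef, sub_ne_zero]
        exact not_congr ⟨fun h => hf h, fun h => congrArg f h⟩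
      have hcard : Fintype.card {j : Fin d // c j ≠ 0} =
          Fintype.card {j : Fin d // ¬ j = j.rev} :=
        Fintype.card_congr (Equiv.subtypeEquivRight hcne)
      rw [hcard, Fintype.card_subtype_compl, Fintype.card_fin]
      by_cases hev : Even d
      · have : IsEmpty {j : Fin d // j = j.rev} := by
          refine ⟨fun ⟨j, hj⟩ => ?_⟩
          rw [Fin.ext_iff, Fin.val_rev] at hj
          obtain ⟨t, ht⟩ := hev
          have := j.isLt; omega
        rw [Fintype.card_eq_zero, if_pos hev]; omega
      · obtain ⟨t, ht⟩ := Nat.not_even_iff_odd.mp hev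
        have hm : t < d := by omega
        have huniq : ∀ j : Fin d, j = j.rev ↔ j = ⟨t, hm⟩ := by
          intro j
          simp only [Fin.ext_iff, Fin.val_rev, Fin.val_mk]
          have := j.isLt; omega
        have : Fintype.card {j : Fin d // j = j.rev} = 1 := by
          rw [Fintype.card_congr (Equiv.subtypeEquivRight huniq),
            Fintype.card_subtype_eq]
        rw [this, if_neg hev]
  · -- upper bound for odd d
    rintro ⟨t, ht⟩ D N hD hN
    have hm : t < d := by omega
    set m : Fin d := ⟨t, hm⟩ with hmdef
    -- column m of the commutator is zero
    have hcol : ∀ i : Fin d, (N * D - D * N) i m = 0 := by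
      intro i
      simp only [Matrix.sub_apply, Matrix.mul_apply]
      have h1 : ∑ l, N i l * D l m = N i m * D m m :=
        Fintype.sum_eq_single m fun l hl => by rw [hD l m hl, mul_zero]
      have h2 : ∑ l, D i l * N l m = D i i * N i m := by
        refine Fintype.sum_eq_single i fun l hl => ?_
        rw [hD i l (fun h => hl h.symm), zero_mul]
      rw [h1, h2]
      by_cases hi : i = m
      · subst hi; ring
      · have : (i : ℕ) + (m : ℕ) + 1 ≠ d := by
          intro h
          exact hi (Fin.ext (by simp only [hmdef] at h ⊢; omega))
        rw [hN i m this]; ring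
    set C := N * D - D * N with hCdef
    set B : Matrix (Fin d) {j : Fin d // j ≠ m} k := C.submatrix id Subtype.val with hBdef
    set P : Matrix {j : Fin d // j ≠ m} (Fin d) k :=
      Matrix.of fun j' j => if (j' : Fin d) = j then (1:k) else 0 with hPdef
    have hfact : C = B * P := by
      ext i j
      rw [Matrix.mul_apply]
      by_cases hj : j = m
      · subst hj
        rw [hcol i]
        refine (Finset.sum_eq_zero fun j' _ => ?_).symm
        simp only [hPdef, Matrix.of_apply, if_neg j'.2, mul_zero]
      · rw [Fintype.sum_eq_single (⟨j, hj⟩ : {j : Fin d // j ≠ m})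
          (fun l hl => by
            have : (l : Fin d) ≠ j := fun h => hl (Subtype.ext h)
            simp only [hPdef, Matrix.of_apply, if_neg this, mul_zero])]
        simp [hBdef, hPdef]
    calc C.rank = (B * P).rank := by rw [hfact]
      _ ≤ B.rank := Matrix.rank_mul_le_left B P
      _ ≤ Fintype.card {j : Fin d // j ≠ m} := Matrix.rank_le_card_width B
      _ = d - 1 := by
          rw [Fintype.card_subtype_compl, Fintype.card_fin, Fintype.card_subtype_eq]
end

section
/- Tensor rank bounds the κ-vector: let A = (A_1, …, A_e) be a tuple of d×d matrices over k, and suppose there exist r ≥ 0, vectors u_1, …, u_r, v_1, …, v_r ∈ k^d, and scalars c_{α,i} ∈ k such that A_i = Σ_{α=1}^r c_{α,i} u_α v_αᵗ for every 1 ≤ i ≤ e (i.e., the associated 3-tensor in k^e ⊗ k^d ⊗ k^d is a sum of r pure tensors). Then κ_j(A) ≤ r·C(e−1, j) for every 0 ≤ j ≤ e−1. -/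
open Matrix

/-!
For a single pure tensor, `A_i = c_i • u vᵗ`, the matrix of `ψ_j(A)` is the Kronecker product of
`u vᵗ` with the matrix of `x ↦ x ∧ ω : Λ^j → Λ^{j+1}`, where `ω = Σ c_i e_i`, so its rank is at
most that of `· ∧ ω`. If `c_{i₀} ≠ 0`, then `e_{S \ i₀} ∧ ω ∧ ω = 0` writes `e_S ∧ ω` for
`i₀ ∈ S` as a combination of the `e_{S'} ∧ ω` with `i₀ ∉ S'`, and there are `C(e-1, j)` such `S'`.
Since `ψ_j` is linear in `A` and rank is subadditive, a sum of `r` pure tensors gives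
`κ_j ≤ r·C(e-1, j)`.
-/

open Finset
open scoped Kronecker

section MatrixRank

variable {K m n : Type*} [Field K] [Fintype n]

theorem Matrix.rank_add_le (A B : Matrix m n K) : (A + B).rank ≤ A.rank + B.rank := by
  rw [Matrix.rank, Matrix.rank, Matrix.rank, Matrix.mulVecLin_add]
  exact (Submodule.finrank_mono (LinearMap.range_add_le _ _)).trans
    (Submodule.finrank_add_le_finrank_add_finrank _ _)

theorem Matrix.rank_sum_le {ι : Type*} (s : Finset ι) (M : ι → Matrix m n K) :
    (∑ i ∈ s, M i).rank ≤ ∑ i ∈ s, (M i).rank :=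
  Finset.le_sum_of_subadditive (fun A : Matrix m n K => A.rank) rank_zero.le rank_add_le s M

theorem Matrix.rank_le_card_of_col_mem_span (A : Matrix m n K) (s : Finset (m → K))
    (h : ∀ j, A.col j ∈ Submodule.span K (s : Set (m → K))) : A.rank ≤ #s := by
  rw [A.rank_eq_finrank_span_cols]
  exact (Submodule.finrank_mono (Submodule.span_le.2 (Set.range_subset_iff.2 h))).trans
    (finrank_span_finset_le_card s)

theorem Matrix.rank_vecMulVec_kronecker_le {p q : Type*} [Fintype m] [Fintype p] [Fintype q]
    (u : m → K) (v : n → K) (B : Matrix p q K) : (vecMulVec u v ⊗ₖ B).rank ≤ B.rank := by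
  classical
  have hfactor : vecMulVec u v ⊗ₖ B = diagonal (fun x : m × p => u x.1) *
      (B.submatrix Prod.snd Prod.snd : Matrix (m × p) (n × q) K) *
        diagonal (fun y : n × q => v y.1) := by
    ext ⟨i₁, i₂⟩ ⟨j₁, j₂⟩
    simp only [kronecker_apply, vecMulVec_apply, mul_diagonal, diagonal_mul, submatrix_apply]
    ring
  rw [hfactor]
  exact (rank_mul_le_left _ _).trans <| (rank_mul_le_right _ _).trans (rank_submatrix_le _ _ _)

end MatrixRank

theorem Submodule.mem_span_image_erase_of_sum_smul_eq_zero {K ι M : Type*} [Field K]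
    [AddCommGroup M] [Module K M] [DecidableEq ι] {s : Finset ι} {a : ι → K} {v : ι → M}
    (h : ∑ x ∈ s, a x • v x = 0) {x₀ : ι} (hx₀ : x₀ ∈ s) (ha : a x₀ ≠ 0) :
    v x₀ ∈ span K (v '' ↑(s.erase x₀)) := by
  rw [← add_sum_erase s _ hx₀] at h
  rw [← inv_smul_smul₀ ha (v x₀), eq_neg_of_add_eq_zero_left h]
  refine smul_mem _ _ (neg_mem (sum_mem fun x hx => smul_mem _ _ (subset_span ?_)))
  exact Set.mem_image_of_mem v hx

section Wedge

variable {R : Type*} [CommRing R] {e : ℕ}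

def wedgeSign (i : Fin e) (S : Finset (Fin e)) : R := (-1) ^ #{s ∈ S | i < s}

theorem wedgeSign_insert {i m : Fin e} {S : Finset (Fin e)} (hm : m ∉ S) :
    (wedgeSign i (insert m S) : R) = (if i < m then -1 else 1) * wedgeSign i S := by
  unfold wedgeSign
  rw [filter_insert]
  split_ifs with h
  · rw [card_insert_of_notMem fun hm' => hm (mem_of_mem_filter m hm'), pow_succ, mul_comm]
  · rw [one_mul]

theorem wedgeSign_mul_wedgeSign_insert {i m : Fin e} {S : Finset (Fin e)} (hi : i ∉ S)
    (hm : m ∉ S) (hne : i ≠ m) :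
    (wedgeSign m S * wedgeSign i (insert m S) : R) =
      -(wedgeSign i S * wedgeSign m (insert i S)) := by
  rw [wedgeSign_insert hm, wedgeSign_insert hi]
  rcases hne.lt_or_gt with h | h <;> simp only [h, h.not_gt, if_true, if_false] <;> ring

/-- The matrix of `x ↦ x ∧ ω` on `Λ(R^e)` in the basis `(e_S)`, where `ω = Σ c_i e_i`. -/
def wedgeMatrix (c : Fin e → R) : Matrix (Finset (Fin e)) (Finset (Fin e)) R :=
  Matrix.of fun T S => ∑ i, if i ∉ S ∧ T = insert i S then wedgeSign i S * c i else 0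

/-- `ω ∧ ω = 0`, applied to `e_S`. -/
theorem sum_wedgeSign_mul_wedgeMatrix_insert (c : Fin e → R) (T S : Finset (Fin e)) :
    ∑ m ∈ Sᶜ, wedgeSign m S * c m * wedgeMatrix c T (insert m S) = 0 := by
  let f : Fin e × Fin e → R := fun p =>
    if p.1 ∉ S ∧ p.2 ∉ S ∧ p.2 ≠ p.1 ∧ T = insert p.2 (insert p.1 S) then
      wedgeSign p.1 S * wedgeSign p.2 (insert p.1 S) * (c p.1 * c p.2) else 0
  have hf : ∑ m ∈ Sᶜ, wedgeSign m S * c m * wedgeMatrix c T (insert m S) = ∑ p, f p := by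
    rw [Fintype.sum_prod_type, ← univ_inter Sᶜ, ← sum_ite_mem]
    refine sum_congr rfl fun m _ => ?_
    by_cases hm : m ∈ S
    · simp [f, hm]
    · simp only [wedgeMatrix, Matrix.of_apply, mem_compl, hm, not_false_eq_true, if_true,
        true_and, mul_sum, f, mem_insert, not_or]
      refine sum_congr rfl fun i _ => ?_
      by_cases h : i ≠ m ∧ i ∉ S ∧ T = insert i (insert m S)
      · rw [if_pos (by tauto), if_pos (by tauto)]; ring
      · rw [if_neg (by tauto), if_neg (by tauto), mul_zero]
  rw [hf]
  refine sum_ninvolution Prod.swap (fun ⟨m, i⟩ => ?_) (fun ⟨m, i⟩ hp hswap => ?_)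
    (fun _ => mem_univ _) Prod.swap_swap
  · have hcomm : insert m (insert i S) = insert i (insert m S) := insert_comm _ _ _
    by_cases h : m ∉ S ∧ i ∉ S ∧ i ≠ m ∧ T = insert i (insert m S)
    · obtain ⟨hm, hi, hne, hT⟩ := h
      simp only [f, Prod.swap, hm, hi, hne, hne.symm, hT, hcomm, not_false_eq_true, Ne, true_and,
        if_true]
      rw [wedgeSign_mul_wedgeSign_insert hi hm hne]
      ring
    · have h' : ¬ (i ∉ S ∧ m ∉ S ∧ m ≠ i ∧ T = insert m (insert i S)) := by
        rw [hcomm]; tauto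
      simp only [f, Prod.swap, if_neg h, if_neg h', add_zero]
  · simp only [Prod.swap_prod_mk, Prod.mk.injEq] at hswap
    obtain rfl := hswap.1
    simp [f] at hp

end Wedge

theorem rank_wedgeMatrix_submatrix_le {K : Type*} [Field K] {e : ℕ} (c : Fin e → K) (j : ℕ) :
    ((wedgeMatrix c).submatrix (Subtype.val : {T : Finset (Fin e) // #T = j + 1} → _)
      (Subtype.val : {S : Finset (Fin e) // #S = j} → _)).rank ≤ (e - 1).choose j := by
  classical
  by_cases hc : c = 0
  · have hzero : wedgeMatrix c = 0 := by ext; simp [wedgeMatrix, hc]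
    simp [hzero]
  obtain ⟨i₀, hi₀⟩ := Function.ne_iff.1 hc
  let col (S : Finset (Fin e)) : {T : Finset (Fin e) // #T = j + 1} → K :=
    fun T => wedgeMatrix c T S
  let G := (univ.erase i₀).powersetCard j
  have hG : ∀ S : Finset (Fin e), #S = j → i₀ ∉ S → col S ∈ Submodule.span K ↑(G.image col) := by
    refine fun S hS hi₀S => Submodule.subset_span (mem_image_of_mem col ?_)
    exact mem_powersetCard.2 ⟨fun x hx => mem_erase.2 ⟨fun h => hi₀S (h ▸ hx), mem_univ x⟩, hS⟩
  have hcol : ∀ S : Finset (Fin e), #S = j → col S ∈ Submodule.span K ↑(G.image col) := by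
    intro S hS
    by_cases hi₀S : i₀ ∈ S
    · set S' := S.erase i₀
      have hrel : ∑ m ∈ S'ᶜ, (wedgeSign m S' * c m) • col (insert m S') = 0 := by
        ext T
        simpa [col] using sum_wedgeSign_mul_wedgeMatrix_insert c T.1 S'
      have hmem := Submodule.mem_span_image_erase_of_sum_smul_eq_zero hrel
        (mem_compl.2 (notMem_erase i₀ S)) (mul_ne_zero (by simp [wedgeSign]) hi₀)
      rw [insert_erase hi₀S] at hmem
      refine Submodule.span_le.2 ?_ hmem
      rintro _ ⟨m, hm, rfl⟩
      obtain ⟨hmi₀, hmS'⟩ := mem_erase.1 hm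
      refine hG _ ?_ ?_
      · rw [card_insert_of_notMem (mem_compl.1 hmS'), card_erase_of_mem hi₀S]
        have := card_pos.2 ⟨i₀, hi₀S⟩
        omega
      · simp [S', hmi₀.symm]
    · exact hG S hS hi₀S
  calc _ ≤ #(G.image col) := rank_le_card_of_col_mem_span _ _ fun S => by exact hcol S.1 S.2
    _ ≤ #G := card_image_le
    _ = (e - 1).choose j := by simp [G]

theorem psiMatrix_sum {R ι : Type*} [CommRing R] {d e : ℕ} (s : Finset ι)
    (B : ι → Fin e → Matrix (Fin d) (Fin d) R) (j : ℕ) :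
    psiMatrix d e (fun i => ∑ α ∈ s, B α i) j = ∑ α ∈ s, psiMatrix d e (B α) j := by
  ext qT pS
  simp only [psiMatrix, Matrix.of_apply, Matrix.sum_apply, mul_sum]
  rw [sum_comm]
  refine sum_congr rfl fun i _ => ?_
  split_ifs <;> simp

theorem psiMatrix_smul_vecMulVec {R : Type*} [CommRing R] {d e : ℕ} (c : Fin e → R)
    (u v : Fin d → R) (j : ℕ) :
    psiMatrix d e (fun i => c i • vecMulVec u v) j =
      vecMulVec u v ⊗ₖ (wedgeMatrix c).submatrix Subtype.val Subtype.val := by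
  ext ⟨q, T⟩ ⟨p, S⟩
  simp only [psiMatrix, wedgeMatrix, wedgeSign, Matrix.of_apply, kronecker_apply, submatrix_apply,
    mul_sum]
  refine sum_congr rfl fun i _ => ?_
  split_ifs
  · simp only [Matrix.smul_apply, vecMulVec_apply, smul_eq_mul]; ring
  · rw [mul_zero]

theorem kappa_smul_vecMulVec_le {K : Type*} [Field K] {d e : ℕ} (c : Fin e → K)
    (u v : Fin d → K) (j : ℕ) :
    kappa d e (fun i => c i • vecMulVec u v) j ≤ (e - 1).choose j := by
  rw [kappa, psiMatrix_smul_vecMulVec]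
  exact (rank_vecMulVec_kronecker_le u v _).trans (rank_wedgeMatrix_submatrix_le c j)

theorem kappa_le_of_tensor_rank_general {k : Type*} [Field k] (d e : ℕ)
    (A : Fin e → Matrix (Fin d) (Fin d) k) (r : ℕ)
    (u v : Fin r → Fin d → k) (c : Fin r → Fin e → k)
    (hA : ∀ i, A i = ∑ α : Fin r, c α i • Matrix.vecMulVec (u α) (v α))
    (j : ℕ) :
    kappa d e A j ≤ r * Nat.choose (e - 1) j := by
  calc kappa d e A j
      = (∑ α, psiMatrix d e (fun i => c α i • vecMulVec (u α) (v α)) j).rank := by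
        rw [kappa, funext hA, psiMatrix_sum]
    _ ≤ ∑ α, kappa d e (fun i => c α i • vecMulVec (u α) (v α)) j := rank_sum_le _ _
    _ ≤ ∑ _α : Fin r, (e - 1).choose j :=
        sum_le_sum fun α _ => kappa_smul_vecMulVec_le (c α) (u α) (v α) j
    _ = r * (e - 1).choose j := by simp

/-- if the 3-tensor associated to the tuple `A` is a sum of `r` pure tensors,
i.e. `A_i = Σ_{α=1}^r c_{α,i} u_α v_αᵗ`, then `κ_j(A) ≤ r·C(e-1, j)`. -/
theorem kappa_le_of_tensor_rank {k : Type*} [Field k] (d e : ℕ) (hd : 1 ≤ d) (he : 1 ≤ e)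
    (A : Fin e → Matrix (Fin d) (Fin d) k) (r : ℕ)
    (u v : Fin r → Fin d → k) (c : Fin r → Fin e → k)
    (hA : ∀ i, A i = ∑ α : Fin r, c α i • Matrix.vecMulVec (u α) (v α))
    (j : ℕ) (hj : j ≤ e - 1) :
    kappa d e A j ≤ r * Nat.choose (e - 1) j :=
  kappa_le_of_tensor_rank_general d e A r u v c hA j
end
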